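/- arXiv:1901.01618 — 7 statements merged into one kernel-verified Lean document; each statement's English description precedes it below -/
import Mathlib

section
/- Let (Λ, Σ) be a measurable space and μ, ν, χ probability measures. Suppose there exist measurable functions g_ψ, g_φ, g₀ : Λ → [0,1] arising from a three-outcome measurement (i.e., there exist measurable p₁, p₂, p₃ : Λ → [0,1] with p₁+p₂+p₃ = 1 pointwise, g_ψ = p₂+p₃, g_φ = p₁+p₃, g₀ = p₁+p₂) such that ∫ g_ψ dμ = ∫ g_φ dν = ∫ g₀ dχ = 1. Then for any Ω ∈ Σ with ν(Ω) = χ(Ω) = 1, there exist Ω′, Ω″ ∈ Σ with ν(Ω′) = 1, χ(Ω″) = 1, and μ(Ω) ≥ μ(Ω′) + μ(Ω″). -/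
/-!
Each preparation almost surely never triggers its forbidden outcome: `p₁ = 0` μ-a.e., `p₂ = 0`
ν-a.e. and `p₃ = 0` χ-a.e. Hence `Ω' = Ω ∩ {p₂ = 0}` and `Ω'' = Ω ∩ {p₃ = 0}` are full for ν
and χ, while on `Ω' ∩ Ω''` we have `p₁ = 1`, so this intersection is μ-null and
`μ Ω' + μ Ω'' = μ (Ω' ∪ Ω'') ≤ μ Ω`.
-/

open MeasureTheory

theorem ae_eq_zero_of_add_eq_one_of_integral_eq_one {α : Type*} [MeasurableSpace α]
    {κ : Measure α} [IsProbabilityMeasure κ] {f g : α → ℝ} (hf : 0 ≤ f)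
    (hfg : ∀ x, f x + g x = 1) (hg : ∫ x, g x ∂κ = 1) : f =ᵐ[κ] 0 := by
  have hf_eq : f = fun x => 1 - g x := funext fun x => by linarith [hfg x]
  have hg_int : Integrable g κ := .of_integral_ne_zero (by rw [hg]; exact one_ne_zero)
  have hf_int : Integrable f κ := hf_eq ▸ (integrable_const 1).sub hg_int
  have hf_zero : ∫ x, f x ∂κ = 0 := by
    rw [hf_eq, integral_sub (integrable_const 1) hg_int, hg]
    simp
  exact (integral_eq_zero_iff_of_nonneg hf hf_int).mp hf_zero

theorem stmt3_general {Λ : Type*} [MeasurableSpace Λ] (μ ν χ : Measure Λ)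
    [IsProbabilityMeasure μ] [IsProbabilityMeasure ν] [IsProbabilityMeasure χ]
    (p₁ p₂ p₃ : Λ → ℝ)
    (hm₂ : Measurable p₂) (hm₃ : Measurable p₃)
    (h₁0 : ∀ l, 0 ≤ p₁ l)
    (h₂0 : ∀ l, 0 ≤ p₂ l)
    (h₃0 : ∀ l, 0 ≤ p₃ l)
    (hsum : ∀ l, p₁ l + p₂ l + p₃ l = 1)
    (hgψ : ∫ l, (p₂ l + p₃ l) ∂μ = 1)
    (hgφ : ∫ l, (p₁ l + p₃ l) ∂ν = 1)
    (hg₀ : ∫ l, (p₁ l + p₂ l) ∂χ = 1)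
    (Ω : Set Λ) (hΩ : MeasurableSet Ω) (hνΩ : ν Ω = 1) (hχΩ : χ Ω = 1) :
    ∃ Ω' Ω'' : Set Λ, MeasurableSet Ω' ∧ MeasurableSet Ω'' ∧
      ν Ω' = 1 ∧ χ Ω'' = 1 ∧ μ Ω' + μ Ω'' ≤ μ Ω := by
  have h₁ : p₁ =ᵐ[μ] 0 := ae_eq_zero_of_add_eq_one_of_integral_eq_one h₁0
    (fun l => by linarith [hsum l]) hgψ
  have h₂ : p₂ =ᵐ[ν] 0 := ae_eq_zero_of_add_eq_one_of_integral_eq_one h₂0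
    (fun l => by linarith [hsum l]) hgφ
  have h₃ : p₃ =ᵐ[χ] 0 := ae_eq_zero_of_add_eq_one_of_integral_eq_one h₃0
    (fun l => by linarith [hsum l]) hg₀
  have hdisj : AEDisjoint μ (Ω ∩ {l | p₂ l = 0}) (Ω ∩ {l | p₃ l = 0}) := by
    refine measure_mono_null ?_ (ae_iff.mp h₁)
    rintro l ⟨⟨-, hl₂ : p₂ l = 0⟩, -, hl₃ : p₃ l = 0⟩ (hl₁ : p₁ l = 0)
    simpa [hl₁, hl₂, hl₃] using hsum l
  have hΩ'' : MeasurableSet (Ω ∩ {l | p₃ l = 0}) :=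
    hΩ.inter (measurableSet_eq_fun hm₃ measurable_const)
  refine ⟨Ω ∩ {l | p₂ l = 0}, Ω ∩ {l | p₃ l = 0},
    hΩ.inter (measurableSet_eq_fun hm₂ measurable_const), hΩ'',
    (measure_inter_conull (ae_iff.mp h₂)).trans hνΩ,
    (measure_inter_conull (ae_iff.mp h₃)).trans hχΩ, ?_⟩
  calc μ (Ω ∩ {l | p₂ l = 0}) + μ (Ω ∩ {l | p₃ l = 0})
      = μ ((Ω ∩ {l | p₂ l = 0}) ∪ (Ω ∩ {l | p₃ l = 0})) :=
        (measure_union₀ hΩ''.nullMeasurableSet hdisj).symm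
    _ ≤ μ Ω := measure_mono (Set.union_subset Set.inter_subset_left Set.inter_subset_left)

theorem stmt3 {Λ : Type*} [MeasurableSpace Λ] (μ ν χ : Measure Λ)
    [IsProbabilityMeasure μ] [IsProbabilityMeasure ν] [IsProbabilityMeasure χ]
    (p₁ p₂ p₃ : Λ → ℝ)
    (hm₁ : Measurable p₁) (hm₂ : Measurable p₂) (hm₃ : Measurable p₃)
    (h₁0 : ∀ l, 0 ≤ p₁ l) (h₁1 : ∀ l, p₁ l ≤ 1)
    (h₂0 : ∀ l, 0 ≤ p₂ l) (h₂1 : ∀ l, p₂ l ≤ 1)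
    (h₃0 : ∀ l, 0 ≤ p₃ l) (h₃1 : ∀ l, p₃ l ≤ 1)
    (hsum : ∀ l, p₁ l + p₂ l + p₃ l = 1)
    (hgψ : ∫ l, (p₂ l + p₃ l) ∂μ = 1)
    (hgφ : ∫ l, (p₁ l + p₃ l) ∂ν = 1)
    (hg₀ : ∫ l, (p₁ l + p₂ l) ∂χ = 1)
    (Ω : Set Λ) (hΩ : MeasurableSet Ω) (hνΩ : ν Ω = 1) (hχΩ : χ Ω = 1) :
    ∃ Ω' Ω'' : Set Λ, MeasurableSet Ω' ∧ MeasurableSet Ω'' ∧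
      ν Ω' = 1 ∧ χ Ω'' = 1 ∧ μ Ω' + μ Ω'' ≤ μ Ω :=
  stmt3_general μ ν χ p₁ p₂ p₃ hm₂ hm₃ h₁0 h₂0 h₃0 hsum hgψ hgφ hg₀ Ω hΩ hνΩ hχΩ
end

section
/- Let 𝓗 be a complex Hilbert space of dimension d > 3, and fix α ∈ (0, 1/√2). Let {|0⟩, |1⟩, |2⟩, |3⟩, ...} be an orthonormal basis. Define β := √2·α², |ψ⟩ := α|0⟩ + β|1⟩ + τ|2⟩ where τ := √(1 − α² − β²) > 0, and |φ⟩ := δ|0⟩ + η|1⟩ + κ|3⟩ where δ := 1 − 2α², η := √2·α, κ := √(1 − δ² − η²). Then (i) |⟨0|ψ⟩|² = |⟨φ|ψ⟩|² = α², and (ii) the numbers a = |⟨φ|ψ⟩|², b = |⟨0|ψ⟩|², c = |⟨0|φ⟩|² satisfy a + b + c < 1 and (1 − a − b − c)² ≥ 4abc. -/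
/-!
The overlaps are computed coordinatewise: `ψ` and `φ` share only the directions `|0⟩` and `|1⟩`,
so `⟨φ|ψ⟩ = δα + ηβ = (1 - 2α²)α + 2α³ = α`. Hence `a = b = α²` and `c = (1 - 2α²)²`, for which
`1 - a - b - c = 2α²(1 - 2α²)`; squaring gives exactly `4abc`, so the criterion holds with equality.
-/

open Matrix

/-- The Caves–Fuchs–Schack criterion: three pure states with pairwise squared overlaps
`a`, `b`, `c` are anti-distinguishable iff this holds. -/
def AntiDistinguishable (a b c : ℝ) : Prop :=
  a + b + c < 1 ∧ 4 * a * b * c ≤ (1 - a - b - c) ^ 2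

theorem antiDistinguishable_sq_sq_one_sub_two_mul_sq {t : ℝ} (ht0 : t ≠ 0) (ht : t ^ 2 < 1 / 2) :
    AntiDistinguishable (t ^ 2) (t ^ 2) ((1 - 2 * t ^ 2) ^ 2) := by
  have hpos : 0 < t ^ 2 := by positivity
  constructor
  · nlinarith
  · exact le_of_eq (by ring)

theorem sq_lt_half_of_lt_one_div_sqrt_two {t : ℝ} (h0 : 0 ≤ t) (h : t < 1 / Real.sqrt 2) :
    t ^ 2 < 1 / 2 := by
  rwa [one_div, ← Real.sqrt_inv, Real.lt_sqrt h0, ← one_div] at h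

section ThreeTerm

variable {ι R : Type*} [DecidableEq ι] [Semiring R]

theorem ite_three_eq_single_add_single_add_single {i j k : ι} (hij : i ≠ j) (hik : i ≠ k)
    (hjk : j ≠ k) (a b c : R) :
    (fun x => if x = i then a else if x = j then b else if x = k then c else 0) =
      Pi.single i a + Pi.single j b + Pi.single k c := by
  funext x
  by_cases hi : x = i <;> by_cases hj : x = j <;> by_cases hk : x = k <;>
    simp_all

variable [Fintype ι] [StarRing R]

theorem star_dotProduct_single_add_single_add_single {i₀ i₁ i₂ i₃ : ι} (h01 : i₀ ≠ i₁)
    (h02 : i₀ ≠ i₂) (h03 : i₀ ≠ i₃) (h12 : i₁ ≠ i₂) (h13 : i₁ ≠ i₃) (h23 : i₂ ≠ i₃)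
    (a b c x y z : R) :
    star (Pi.single i₀ x + Pi.single i₁ y + Pi.single i₃ z) ⬝ᵥ
        (Pi.single i₀ a + Pi.single i₁ b + Pi.single i₂ c) =
      star x * a + star y * b := by
  simp [dotProduct_add, Pi.star_single, h01, h02.symm, h03, h12.symm, h13, h23.symm]

end ThreeTerm

theorem stmt5 {d : ℕ} (hd : 3 < d) (α : ℝ) (hα0 : 0 < α) (hα : α < 1 / Real.sqrt 2)
    (β τ δ η κ : ℝ)
    (hβ : β = Real.sqrt 2 * α ^ 2)
    (hδ : δ = 1 - 2 * α ^ 2)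
    (hη : η = Real.sqrt 2 * α)
    (ψ φ : Fin d → ℂ)
    (hψ : ψ = fun i => if i = ⟨0, by omega⟩ then (α : ℂ)
      else if i = ⟨1, by omega⟩ then (β : ℂ)
      else if i = ⟨2, by omega⟩ then (τ : ℂ) else 0)
    (hφ : φ = fun i => if i = ⟨0, by omega⟩ then (δ : ℂ)
      else if i = ⟨1, by omega⟩ then (η : ℂ)
      else if i = ⟨3, by omega⟩ then (κ : ℂ) else 0) :
    (Complex.normSq (ψ ⟨0, by omega⟩) = α ^ 2 ∧
      Complex.normSq (star φ ⬝ᵥ ψ) = α ^ 2) ∧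
    (Complex.normSq (star φ ⬝ᵥ ψ) + Complex.normSq (ψ ⟨0, by omega⟩) +
        Complex.normSq (φ ⟨0, by omega⟩) < 1 ∧
      4 * Complex.normSq (star φ ⬝ᵥ ψ) * Complex.normSq (ψ ⟨0, by omega⟩) *
          Complex.normSq (φ ⟨0, by omega⟩) ≤
        (1 - Complex.normSq (star φ ⬝ᵥ ψ) - Complex.normSq (ψ ⟨0, by omega⟩) -
            Complex.normSq (φ ⟨0, by omega⟩)) ^ 2) := by
  have hα2 := sq_lt_half_of_lt_one_div_sqrt_two hα0.le hα
  have hoverlap : star φ ⬝ᵥ ψ = α := by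
    rw [hψ, hφ, ite_three_eq_single_add_single_add_single (by simp) (by simp) (by simp),
      ite_three_eq_single_add_single_add_single (by simp) (by simp) (by simp),
      star_dotProduct_single_add_single_add_single (by simp) (by simp) (by simp) (by simp)
        (by simp) (by simp)]
    simp only [Complex.star_def, Complex.conj_ofReal]
    norm_cast
    rw [hβ, hδ, hη]
    linear_combination α ^ 3 * Real.sq_sqrt (zero_le_two : (0 : ℝ) ≤ 2)
  have hψ0 : ψ ⟨0, by omega⟩ = α := by simp [hψ]
  have hφ0 : φ ⟨0, by omega⟩ = δ := by simp [hφ]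
  simp only [hoverlap, hψ0, hφ0, Complex.normSq_ofReal, ← sq, hδ, and_self, true_and]
  exact antiDistinguishable_sq_sq_one_sub_two_mul_sq hα0.ne' hα2
end

section
/- Let ρ_{BC|A} be the Choi-Jamiołkowski operator of a completely positive trace-preserving map from system A to the composite system B⊗C (normalized so that Tr_{BC} ρ_{BC|A} = 𝟙_{A*}), and let ρ_{B|A} := Tr_C ρ_{BC|A}, ρ_{C|A} := Tr_B ρ_{BC|A}. If ρ_{BC|A} = ρ_{B|A} · ρ_{C|A}, then [ρ_{B|A}, ρ_{C|A}] = 0, and the quantum conditional mutual information I(B : C | A) evaluated on the normalized state ρ̂_{BC|A} := ρ_{BC|A}/d_A vanishes. -/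
open Matrix
open scoped ComplexOrder

noncomputable section

/-- Von Neumann entropy of a matrix: `-∑ λᵢ log λᵢ` over the eigenvalues when the
matrix is Hermitian, and `0` (junk value) otherwise. -/
noncomputable def vnEntropy {n : Type*} [Fintype n] [DecidableEq n]
    (ρ : Matrix n n ℂ) : ℝ :=
  if h : ρ.IsHermitian then ∑ i, Real.negMulLog (h.eigenvalues i) else 0

variable {b c a : Type*} [Fintype b] [DecidableEq b] [Fintype c] [DecidableEq c]
  [Fintype a] [DecidableEq a]

/-- Partial trace over the `C` factor: marginal on `B ⊗ A*`. -/
def margBA (ρ : Matrix (b × c × a) (b × c × a) ℂ) : Matrix (b × a) (b × a) ℂ :=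
  Matrix.of fun p q => ∑ y : c, ρ (p.1, y, p.2) (q.1, y, q.2)

/-- Partial trace over the `B` factor: marginal on `C ⊗ A*`. -/
def margCA (ρ : Matrix (b × c × a) (b × c × a) ℂ) : Matrix (c × a) (c × a) ℂ :=
  Matrix.of fun p q => ∑ x : b, ρ (x, p.1, p.2) (x, q.1, q.2)

/-- Partial trace over the `B ⊗ C` factor: marginal on `A*`. -/
def margA (ρ : Matrix (b × c × a) (b × c × a) ℂ) : Matrix a a ℂ :=
  Matrix.of fun s t => ∑ x : b, ∑ y : c, ρ (x, y, s) (x, y, t)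

/-- Quantum conditional mutual information `I(B : C | A)` of an operator on
`B ⊗ C ⊗ A*`: `S(ρ_{BA}) + S(ρ_{CA}) − S(ρ_{BCA}) − S(ρ_A)`. -/
noncomputable def cmi (ρ : Matrix (b × c × a) (b × c × a) ℂ) : ℝ :=
  vnEntropy (margBA ρ) + vnEntropy (margCA ρ) - vnEntropy ρ - vnEntropy (margA ρ)

/-- Embed an operator on `B ⊗ A*` into `B ⊗ C ⊗ A*` (tensoring with the identity on `C`). -/
def liftB (M : Matrix (b × a) (b × a) ℂ) : Matrix (b × c × a) (b × c × a) ℂ :=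
  Matrix.of fun p q => if p.2.1 = q.2.1 then M (p.1, p.2.2) (q.1, q.2.2) else 0

/-- Embed an operator on `C ⊗ A*` into `B ⊗ C ⊗ A*` (tensoring with the identity on `B`). -/
def liftC (M : Matrix (c × a) (c × a) ℂ) : Matrix (b × c × a) (b × c × a) ℂ :=
  Matrix.of fun p q => if p.1 = q.1 then M p.2 q.2 else 0

/-!
The three operators `ρ`, `X = ρ_{B|A} ⊗ 𝟙_C` and `Y = 𝟙_B ⊗ ρ_{C|A}` are Hermitian, so `ρ = X Y`
forces `X Y = (X Y)ᴴ = Y X`. Commuting Hermitian matrices are simultaneously unitarily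
diagonalizable, so the scalar identity `η(x y) = y η(x) + x η(y)` for `η = negMulLog` lifts to
`η(X Y) = Y η(X) + X η(Y)`. Taking traces, `Tr (Y η(X)) = Tr (Tr_C ρ_{C|A} · Tr_B η(ρ_{B|A}))
= Tr η(ρ_{B|A})` because `Tr_C ρ_{C|A} = ρ_A = 𝟙`, and symmetrically for the other term; hence
`S(ρ) = S(ρ_{B|A}) + S(ρ_{C|A})`, and since `S(𝟙) = 0` the conditional mutual information
vanishes. Rescaling by a real `r` multiplies `I(B : C | A)` by `r`, because all four marginals
have the same trace.
-/

open Unitary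

lemma Unitary.conj_eq_conj_iff {R : Type*} [Monoid R] [StarMul R] (U V : unitary R) (x y : R) :
    (U : R) * x * star (U : R) = V * y * star (V : R) ↔
      star (V : R) * U * x = y * (star (V : R) * U) := by
  constructor
  · intro h
    calc star (V : R) * U * x = star (V : R) * (U * x * star (U : R)) * U := by
          simp [mul_assoc]
      _ = y * (star (V : R) * U) := by
          rw [h]; simp only [← mul_assoc, coe_star_mul_self, one_mul]
  · intro h
    calc (U : R) * x * star (U : R) = V * (star (V : R) * U * x) * star (U : R) := by
          simp [← mul_assoc]
      _ = V * y * star (V : R) := by rw [h]; simp [mul_assoc]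

lemma Unitary.eq_conj_of_mul_eq {R : Type*} [Monoid R] [StarMul R] (U : unitary R) {x y : R}
    (h : x * U = U * y) : x = U * y * star (U : R) := by
  rw [← h, mul_assoc, mul_star_self_of_mem U.2, mul_one]

open Module.End in
theorem LinearMap.IsSymmetric.exists_orthonormalBasis_apply_eq_smul_of_commute
    {𝕜 E : Type*} [RCLike 𝕜] [NormedAddCommGroup E] [InnerProductSpace 𝕜 E]
    [FiniteDimensional 𝕜 E] {A B : E →ₗ[𝕜] E} (hA : A.IsSymmetric) (hB : B.IsSymmetric)
    (hAB : Commute A B) {ι : Type*} [Fintype ι] (hι : Module.finrank 𝕜 E = Fintype.card ι) :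
    ∃ (w : OrthonormalBasis ι 𝕜 E) (α β : ι → ℝ),
      ∀ i, A (w i) = (α i : 𝕜) • w i ∧ B (w i) = (β i : 𝕜) • w i := by
  let V : 𝕜 × 𝕜 → Submodule 𝕜 E := fun μ => eigenspace A μ.2 ⊓ eigenspace B μ.1
  have hint : DirectSum.IsInternal V := hA.directSum_isInternal_of_commute hB hAB
  have : Fintype {μ // V μ ≠ ⊥} := hint.submodule_iSupIndep.fintypeNeBotOfFiniteDimensional
  have hint' : DirectSum.IsInternal fun μ : {μ // V μ ≠ ⊥} => V μ :=
    DirectSum.isInternal_ne_bot_iff.mpr hint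
  have horth := (hA.orthogonalFamily_eigenspace_inf_eigenspace hB).comp
    (Subtype.val_injective (p := fun μ => V μ ≠ ⊥))
  let e := (Fintype.equivFin ι).symm
  let w := (hint'.subordinateOrthonormalBasis hι horth).reindex e
  let μ : ι → 𝕜 × 𝕜 := fun i => (hint'.subordinateOrthonormalBasisIndex hι (e.symm i) horth).1
  have hmem : ∀ i, w i ∈ V (μ i) := fun i => by
    simpa [w] using hint'.subordinateOrthonormalBasis_subordinate hι (e.symm i) horth
  have hA' : ∀ i, A (w i) = (μ i).2 • w i := fun i => mem_eigenspace_iff.mp (hmem i).1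
  have hB' : ∀ i, B (w i) = (μ i).1 • w i := fun i => mem_eigenspace_iff.mp (hmem i).2
  have hreal : ∀ T : E →ₗ[𝕜] E, T.IsSymmetric → ∀ i (z : 𝕜), T (w i) = z • w i →
      ((RCLike.re z : ℝ) : 𝕜) = z := fun T hT i z hz =>
    RCLike.conj_eq_iff_re.mp <| hT.conj_eigenvalue_eq_self <|
      hasEigenvalue_of_hasEigenvector ⟨mem_eigenspace_iff.mpr hz, w.orthonormal.ne_zero i⟩
  refine ⟨w, fun i => RCLike.re (μ i).2, fun i => RCLike.re (μ i).1, fun i => ⟨?_, ?_⟩⟩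
  · rw [hreal A hA i _ (hA' i), hA' i]
  · rw [hreal B hB i _ (hB' i), hB' i]

section Spectral

variable {𝕜 n : Type*} [RCLike 𝕜] [Fintype n] [DecidableEq n]

lemma OrthonormalBasis.eq_conjStarAlgAut_diagonal_of_mulVec_eq
    (w : OrthonormalBasis n 𝕜 (EuclideanSpace 𝕜 n)) {X : Matrix n n 𝕜} {d : n → 𝕜}
    (h : ∀ j, X *ᵥ w j = d j • w j) :
    X = conjStarAlgAut 𝕜 _
      ⟨_, (EuclideanSpace.basisFun n 𝕜).toMatrix_orthonormalBasis_mem_unitary w⟩ (diagonal d) := by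
  rw [conjStarAlgAut_apply]
  refine Unitary.eq_conj_of_mul_eq _ ?_
  ext i j
  rw [mul_diagonal]
  simpa [Matrix.mul_apply, mulVec, dotProduct, Module.Basis.toMatrix_apply, mul_comm] using
    congr_fun (h j) i

theorem Matrix.IsHermitian.exists_unitary_diagonal_of_commute {X Y : Matrix n n 𝕜}
    (hX : X.IsHermitian) (hY : Y.IsHermitian) (hXY : Commute X Y) :
    ∃ (U : unitary (Matrix n n 𝕜)) (μ ν : n → ℝ),
      X = conjStarAlgAut 𝕜 _ U (diagonal (RCLike.ofReal ∘ μ)) ∧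
      Y = conjStarAlgAut 𝕜 _ U (diagonal (RCLike.ofReal ∘ ν)) := by
  obtain ⟨w, μ, ν, hw⟩ :=
    (isSymmetric_toEuclideanLin_iff.mpr hX).exists_orthonormalBasis_apply_eq_smul_of_commute
      (isSymmetric_toEuclideanLin_iff.mpr hY) (hXY.map (toLpLinAlgEquiv 2)) finrank_euclideanSpace
  refine ⟨_, μ, ν, w.eq_conjStarAlgAut_diagonal_of_mulVec_eq fun j => ?_,
    w.eq_conjStarAlgAut_diagonal_of_mulVec_eq fun j => ?_⟩
  · simpa using congr_arg WithLp.ofLp (hw j).1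
  · simpa using congr_arg WithLp.ofLp (hw j).2

lemma Matrix.mul_diagonal_comp_eq_of_mul_diagonal_eq {W : Matrix n n 𝕜} {d e : n → ℝ}
    (h : W * diagonal (RCLike.ofReal ∘ d) = diagonal (RCLike.ofReal ∘ e) * W) (f : ℝ → ℝ) :
    W * diagonal (RCLike.ofReal ∘ f ∘ d) = diagonal (RCLike.ofReal ∘ f ∘ e) * W := by
  ext i j
  have hij := congr_fun₂ h i j
  simp only [mul_diagonal, diagonal_mul, Function.comp_apply] at hij ⊢
  by_cases hW : W i j = 0
  · simp [hW]
  · have : d j = e i := by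
      rw [mul_comm] at hij
      exact_mod_cast mul_right_cancel₀ hW hij
    rw [this, mul_comm]

lemma Unitary.conjStarAlgAut_diagonal_comp_eq {U V : unitary (Matrix n n 𝕜)} {d e : n → ℝ}
    (h : conjStarAlgAut 𝕜 _ U (diagonal (RCLike.ofReal ∘ d))
      = conjStarAlgAut 𝕜 _ V (diagonal (RCLike.ofReal ∘ e))) (f : ℝ → ℝ) :
    conjStarAlgAut 𝕜 _ U (diagonal (RCLike.ofReal ∘ f ∘ d))
      = conjStarAlgAut 𝕜 _ V (diagonal (RCLike.ofReal ∘ f ∘ e)) := by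
  simp only [conjStarAlgAut_apply, conj_eq_conj_iff] at h ⊢
  exact mul_diagonal_comp_eq_of_mul_diagonal_eq h f

lemma Unitary.cfc_conjStarAlgAut_diagonal (U : unitary (Matrix n n 𝕜)) (d : n → ℝ) (f : ℝ → ℝ) :
    cfc f (conjStarAlgAut 𝕜 _ U (diagonal (RCLike.ofReal ∘ d)))
      = conjStarAlgAut 𝕜 _ U (diagonal (RCLike.ofReal ∘ f ∘ d)) := by
  have hD : IsSelfAdjoint (diagonal (RCLike.ofReal ∘ d) : Matrix n n 𝕜) :=
    isHermitian_diagonal_of_self_adjoint _ (by ext; simp)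
  have hH : (conjStarAlgAut 𝕜 _ U (diagonal (RCLike.ofReal ∘ d))).IsHermitian :=
    hD.map (conjStarAlgAut 𝕜 _ U)
  rw [hH.cfc_eq, IsHermitian.cfc]
  exact (conjStarAlgAut_diagonal_comp_eq hH.spectral_theorem f).symm

theorem Matrix.IsHermitian.cfc_negMulLog_mul_of_commute {X Y : Matrix n n 𝕜}
    (hX : X.IsHermitian) (hY : Y.IsHermitian) (hXY : Commute X Y) :
    cfc Real.negMulLog (X * Y) = Y * cfc Real.negMulLog X + X * cfc Real.negMulLog Y := by
  obtain ⟨U, μ, ν, rfl, rfl⟩ := hX.exists_unitary_diagonal_of_commute hY hXY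
  have hprod : ∀ μ ν : n → ℝ, diagonal (RCLike.ofReal ∘ μ) * diagonal (RCLike.ofReal ∘ ν)
      = (diagonal (RCLike.ofReal ∘ (μ * ν)) : Matrix n n 𝕜) := fun μ ν => by
    rw [diagonal_mul_diagonal]
    congr 1
    ext i
    simp
  rw [← map_mul, hprod, cfc_conjStarAlgAut_diagonal, cfc_conjStarAlgAut_diagonal,
    cfc_conjStarAlgAut_diagonal, ← map_mul, ← map_mul, hprod, hprod, ← map_add, diagonal_add]
  congr 2
  ext i
  simp [Real.negMulLog_mul]

end Spectral

section Entropy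

variable {n : Type*} [Fintype n] [DecidableEq n]

lemma Matrix.IsHermitian.vnEntropy_eq_re_trace_cfc {H : Matrix n n ℂ} (hH : H.IsHermitian) :
    vnEntropy H = (cfc Real.negMulLog H).trace.re := by
  rw [vnEntropy, dif_pos hH, hH.cfc_eq, IsHermitian.cfc, conjStarAlgAut_apply, trace_mul_cycle,
    coe_star_mul_self, one_mul, trace_diagonal]
  simp

lemma vnEntropy_one : vnEntropy (1 : Matrix n n ℂ) = 0 := by
  rw [isHermitian_one.vnEntropy_eq_re_trace_cfc, cfc_apply_one, Real.negMulLog_one, map_zero,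
    trace_zero, Complex.zero_re]

lemma Matrix.IsHermitian.vnEntropy_smul {H : Matrix n n ℂ} (hH : H.IsHermitian) (r : ℝ) :
    vnEntropy (r • H) = Real.negMulLog r * H.trace.re + r * vnEntropy H := by
  have hH' : IsSelfAdjoint H := hH
  have hrH : (r • H).IsHermitian := IsSelfAdjoint.smul (.all r) hH'
  have hf : (Real.negMulLog <| r • ·) = fun x => Real.negMulLog r * x + r * Real.negMulLog x := by
    ext x
    rw [smul_eq_mul, Real.negMulLog_mul]
    ring
  have hcfc : cfc Real.negMulLog (r • H) = Real.negMulLog r • H + r • cfc Real.negMulLog H := by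
    rw [← cfc_comp_smul r Real.negMulLog H, hf,
      cfc_add (a := H) (fun x => Real.negMulLog r * x) (fun x => r * Real.negMulLog x),
      cfc_const_mul _ (fun x => x) H, cfc_const_mul r Real.negMulLog H, cfc_id' ℝ H]
  rw [hrH.vnEntropy_eq_re_trace_cfc, hH.vnEntropy_eq_re_trace_cfc, hcfc, trace_add, trace_smul,
    trace_smul]
  simp

end Entropy

def partialTraceLeft {m n R : Type*} [Fintype m] [AddCommMonoid R]
    (G : Matrix (m × n) (m × n) R) : Matrix n n R :=
  Matrix.of fun s t => ∑ x, G (x, s) (x, t)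

lemma trace_partialTraceLeft {m n R : Type*} [Fintype m] [Fintype n] [AddCommMonoid R]
    (G : Matrix (m × n) (m × n) R) : (partialTraceLeft G).trace = G.trace := by
  simp only [trace, diag, partialTraceLeft, of_apply, Fintype.sum_prod_type]
  exact Finset.sum_comm

lemma Matrix.IsHermitian.partialTraceLeft {m n : Type*} [Fintype m]
    {G : Matrix (m × n) (m × n) ℂ} (hG : G.IsHermitian) : (partialTraceLeft G).IsHermitian := by
  ext s t
  simp only [conjTranspose_apply, _root_.partialTraceLeft, of_apply, star_sum]
  exact Finset.sum_congr rfl fun x _ => hG.apply _ _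

section Marginals

variable {b c a : Type*}

lemma partialTraceLeft_margBA [Fintype b] [Fintype c] (ρ : Matrix (b × c × a) (b × c × a) ℂ) :
    partialTraceLeft (margBA ρ) = margA ρ :=
  rfl

lemma partialTraceLeft_margCA [Fintype b] [Fintype c] (ρ : Matrix (b × c × a) (b × c × a) ℂ) :
    partialTraceLeft (margCA ρ) = margA ρ := by
  ext s t
  exact Finset.sum_comm

lemma trace_margBA [Fintype b] [Fintype c] [Fintype a] (ρ : Matrix (b × c × a) (b × c × a) ℂ) :
    (margBA ρ).trace = ρ.trace := by
  simp only [trace, diag, margBA, of_apply, Fintype.sum_prod_type]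
  exact Finset.sum_congr rfl fun _ _ => Finset.sum_comm

lemma trace_margCA [Fintype b] [Fintype c] [Fintype a] (ρ : Matrix (b × c × a) (b × c × a) ℂ) :
    (margCA ρ).trace = ρ.trace := by
  rw [← trace_partialTraceLeft, partialTraceLeft_margCA, ← partialTraceLeft_margBA,
    trace_partialTraceLeft, trace_margBA]

lemma trace_margA [Fintype b] [Fintype c] [Fintype a] (ρ : Matrix (b × c × a) (b × c × a) ℂ) :
    (margA ρ).trace = ρ.trace := by
  rw [← partialTraceLeft_margBA, trace_partialTraceLeft, trace_margBA]

lemma Matrix.IsHermitian.margBA [Fintype c] {ρ : Matrix (b × c × a) (b × c × a) ℂ}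
    (hρ : ρ.IsHermitian) : (margBA ρ).IsHermitian := by
  ext p q
  simp only [conjTranspose_apply, _root_.margBA, of_apply, star_sum]
  exact Finset.sum_congr rfl fun y _ => hρ.apply _ _

lemma Matrix.IsHermitian.margCA [Fintype b] {ρ : Matrix (b × c × a) (b × c × a) ℂ}
    (hρ : ρ.IsHermitian) : (margCA ρ).IsHermitian := by
  ext p q
  simp only [conjTranspose_apply, _root_.margCA, of_apply, star_sum]
  exact Finset.sum_congr rfl fun x _ => hρ.apply _ _

lemma margBA_smul [Fintype c] (r : ℝ) (ρ : Matrix (b × c × a) (b × c × a) ℂ) :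
    margBA (r • ρ) = r • margBA ρ := by
  ext p q
  simp [margBA, Finset.smul_sum]

lemma margCA_smul [Fintype b] (r : ℝ) (ρ : Matrix (b × c × a) (b × c × a) ℂ) :
    margCA (r • ρ) = r • margCA ρ := by
  ext p q
  simp [margCA, Finset.smul_sum]

lemma margA_smul [Fintype b] [Fintype c] (r : ℝ) (ρ : Matrix (b × c × a) (b × c × a) ℂ) :
    margA (r • ρ) = r • margA ρ := by
  ext s t
  simp [margA, Finset.smul_sum]

lemma cmi_smul [Fintype b] [DecidableEq b] [Fintype c] [DecidableEq c] [Fintype a]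
    [DecidableEq a] {ρ : Matrix (b × c × a) (b × c × a) ℂ} (hρ : ρ.IsHermitian) (r : ℝ) :
    cmi (r • ρ) = r * cmi ρ := by
  have hA : (margA ρ).IsHermitian := partialTraceLeft_margBA ρ ▸ hρ.margBA.partialTraceLeft
  rw [cmi, cmi, margBA_smul, margCA_smul, margA_smul, hρ.margBA.vnEntropy_smul,
    hρ.margCA.vnEntropy_smul, hρ.vnEntropy_smul, hA.vnEntropy_smul, trace_margBA, trace_margCA,
    trace_margA]
  ring

end Marginals
section Lifts

variable {b c a : Type*}

def liftBStarAlgHom [Fintype b] [DecidableEq b] [Fintype c] [DecidableEq c] [Fintype a]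
    [DecidableEq a] : Matrix (b × a) (b × a) ℂ →⋆ₐ[ℂ] Matrix (b × c × a) (b × c × a) ℂ where
  toFun := liftB
  map_one' := by
    ext ⟨x, y, s⟩ ⟨x', y', s'⟩
    by_cases hy : y = y' <;> simp [liftB, one_apply, hy]
  map_mul' G H := by
    ext ⟨x, y, s⟩ ⟨x', y', s'⟩
    by_cases hy : y = y' <;> simp [liftB, Matrix.mul_apply, Fintype.sum_prod_type, hy]
  map_zero' := by
    ext ⟨x, y, s⟩ ⟨x', y', s'⟩
    simp [liftB]
  map_add' G H := by
    ext ⟨x, y, s⟩ ⟨x', y', s'⟩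
    by_cases hy : y = y' <;> simp [liftB, hy]
  commutes' z := by
    ext ⟨x, y, s⟩ ⟨x', y', s'⟩
    by_cases hy : y = y' <;> simp [liftB, algebraMap_matrix_apply, hy]
  map_star' G := by
    ext ⟨x, y, s⟩ ⟨x', y', s'⟩
    by_cases hy : y = y' <;> simp [liftB, hy, eq_comm]

def liftCStarAlgHom [Fintype b] [DecidableEq b] [Fintype c] [DecidableEq c] [Fintype a]
    [DecidableEq a] : Matrix (c × a) (c × a) ℂ →⋆ₐ[ℂ] Matrix (b × c × a) (b × c × a) ℂ where
  toFun := liftC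
  map_one' := by
    ext ⟨x, y, s⟩ ⟨x', y', s'⟩
    by_cases hx : x = x' <;> simp [liftC, Matrix.one_apply, hx]
  map_mul' G H := by
    ext ⟨x, y, s⟩ ⟨x', y', s'⟩
    by_cases hx : x = x' <;> simp [liftC, Matrix.mul_apply, Fintype.sum_prod_type, hx]
  map_zero' := by
    ext ⟨x, y, s⟩ ⟨x', y', s'⟩
    simp [liftC]
  map_add' G H := by
    ext ⟨x, y, s⟩ ⟨x', y', s'⟩
    by_cases hx : x = x' <;> simp [liftC, hx]
  commutes' z := by
    ext ⟨x, y, s⟩ ⟨x', y', s'⟩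
    by_cases hx : x = x' <;> simp [liftC, algebraMap_matrix_apply, hx]
  map_star' G := by
    ext ⟨x, y, s⟩ ⟨x', y', s'⟩
    by_cases hx : x = x' <;> simp [liftC, hx, eq_comm]

lemma trace_liftC_mul_liftB [Fintype b] [DecidableEq b] [Fintype c] [DecidableEq c] [Fintype a]
    (N : Matrix (c × a) (c × a) ℂ) (G : Matrix (b × a) (b × a) ℂ) :
    (liftC N * liftB G).trace = (partialTraceLeft N * partialTraceLeft G).trace := by
  simp only [trace, diag, Matrix.mul_apply, liftB, liftC, partialTraceLeft, of_apply,
    Fintype.sum_prod_type, ite_mul, mul_ite, zero_mul, mul_zero, Finset.sum_ite_eq,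
    Finset.sum_ite_eq', Finset.mem_univ, ite_true, Finset.sum_mul, Finset.mul_sum,
    Finset.sum_ite_irrel, Finset.sum_const_zero]
  calc ∑ x : b, ∑ y : c, ∑ s : a, ∑ t : a, N (y, s) (y, t) * G (x, t) (x, s)
      = ∑ x : b, ∑ s : a, ∑ t : a, ∑ y : c, N (y, s) (y, t) * G (x, t) (x, s) := by
        refine Finset.sum_congr rfl fun x _ => ?_
        rw [Finset.sum_comm]
        exact Finset.sum_congr rfl fun s _ => Finset.sum_comm
    _ = _ := by
        rw [Finset.sum_comm]
        exact Finset.sum_congr rfl fun s _ => Finset.sum_comm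

variable [Fintype b] [DecidableEq b] [Fintype c] [DecidableEq c] [Fintype a] [DecidableEq a]

lemma Matrix.IsHermitian.liftB {M : Matrix (b × a) (b × a) ℂ} (hM : M.IsHermitian) :
    (liftB (c := c) M).IsHermitian :=
  IsSelfAdjoint.map hM liftBStarAlgHom

lemma Matrix.IsHermitian.liftC {N : Matrix (c × a) (c × a) ℂ} (hN : N.IsHermitian) :
    (liftC (b := b) N).IsHermitian :=
  IsSelfAdjoint.map hN liftCStarAlgHom

lemma cfc_liftB (f : ℝ → ℝ) {M : Matrix (b × a) (b × a) ℂ} (hM : M.IsHermitian) :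
    cfc f (liftB (c := c) M) = liftB (cfc f M) :=
  have : Continuous (liftBStarAlgHom (c := c)) :=
    LinearMap.continuous_of_finiteDimensional (liftBStarAlgHom (c := c)).toLinearMap
  ((liftBStarAlgHom (c := c)).map_cfc f M (finite_real_spectrum.continuousOn f) (ha := hM)
    (hφa := hM.liftB)).symm

lemma cfc_liftC (f : ℝ → ℝ) {N : Matrix (c × a) (c × a) ℂ} (hN : N.IsHermitian) :
    cfc f (liftC (b := b) N) = liftC (cfc f N) :=
  have : Continuous (liftCStarAlgHom (b := b)) :=
    LinearMap.continuous_of_finiteDimensional (liftCStarAlgHom (b := b)).toLinearMap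
  ((liftCStarAlgHom (b := b)).map_cfc f N (finite_real_spectrum.continuousOn f) (ha := hN)
    (hφa := hN.liftC)).symm

lemma vnEntropy_liftB_mul_liftC {M : Matrix (b × a) (b × a) ℂ} {N : Matrix (c × a) (c × a) ℂ}
    (hM : M.IsHermitian) (hN : N.IsHermitian) (hMN : Commute (liftB M) (liftC N))
    (hM₁ : partialTraceLeft M = 1) (hN₁ : partialTraceLeft N = 1) :
    vnEntropy (liftB M * liftC N) = vnEntropy M + vnEntropy N := by
  have hXY : (liftB M * liftC N).IsHermitian :=
    (hM.liftB.isSelfAdjoint.commute_iff hN.liftC.isSelfAdjoint).mp hMN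
  rw [hXY.vnEntropy_eq_re_trace_cfc, hM.liftB.cfc_negMulLog_mul_of_commute hN.liftC hMN,
    cfc_liftB _ hM,
    cfc_liftC _ hN, trace_add, trace_liftC_mul_liftB, trace_mul_comm (liftB M),
    trace_liftC_mul_liftB, hN₁, hM₁, one_mul, mul_one, trace_partialTraceLeft,
    trace_partialTraceLeft, Complex.add_re, hM.vnEntropy_eq_re_trace_cfc,
    hN.vnEntropy_eq_re_trace_cfc]

end Lifts

/-- If the Choi operator of a channel from `A` to `B ⊗ C` factorizes as
`ρ_{BC|A} = ρ_{B|A} · ρ_{C|A}`, then the two marginal Choi operators commute and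
the quantum conditional mutual information `I(B : C | A)` on the normalized
state `ρ̂ = ρ / d_A` vanishes. -/
theorem stmt8 (ρ : Matrix (b × c × a) (b × c × a) ℂ)
    (hpos : ρ.PosSemidef) (htr : margA ρ = 1)
    (hfact : ρ = liftB (margBA ρ) * liftC (margCA ρ)) :
    liftB (margBA ρ) * liftC (margCA ρ) = liftC (margCA ρ) * liftB (margBA ρ) ∧
    cmi (((Fintype.card a : ℂ))⁻¹ • ρ) = 0 := by
  have hρ : ρ.IsHermitian := hpos.1
  have hcomm : Commute (liftB (margBA ρ)) (liftC (margCA ρ)) :=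
    (hρ.margBA.liftB.isSelfAdjoint.commute_iff hρ.margCA.liftC.isSelfAdjoint).mpr
      (hfact ▸ hρ)
  refine ⟨hcomm.eq, ?_⟩
  have hS : vnEntropy ρ = vnEntropy (margBA ρ) + vnEntropy (margCA ρ) := by
    conv_lhs => rw [hfact]
    exact vnEntropy_liftB_mul_liftC hρ.margBA hρ.margCA hcomm
      ((partialTraceLeft_margBA ρ).trans htr) ((partialTraceLeft_margCA ρ).trans htr)
  have hcmi : cmi ρ = 0 := by
    rw [cmi, hS, htr, vnEntropy_one]
    ring
  have hscale : ((Fintype.card a : ℂ))⁻¹ • ρ = (Fintype.card a : ℝ)⁻¹ • ρ := by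
    simp [← Complex.coe_smul]
  rw [hscale, cmi_smul hρ, hcmi, mul_zero]

end
end

section
/- Let 𝓗_A = ⊕ᵢ (𝓗_{Aᵢᴸ} ⊗ 𝓗_{Aᵢᴿ}) be a finite orthogonal direct-sum decomposition of a finite-dimensional Hilbert space, and suppose ρ_{BC|A} = Σᵢ (ρ_{B|Aᵢᴸ} ⊗ ρ_{C|Aᵢᴿ}), where each ρ_{B|Aᵢᴸ} is a positive operator on 𝓗_B ⊗ 𝓗_{Aᵢᴸ}* with Tr_B ρ_{B|Aᵢᴸ} = 𝟙 and similarly for ρ_{C|Aᵢᴿ}. Then the marginals ρ_{B|A} := Tr_C ρ_{BC|A} and ρ_{C|A} := Tr_B ρ_{BC|A} commute and satisfy ρ_{B|A}·ρ_{C|A} = ρ_{BC|A}. -/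
/-!
Transporting along `e` reduces everything to the index set `Σ i, L i × R i` itself, where `ρ`
becomes the block-diagonal matrix `blockKron ρB ρC` with blocks `ρ_{B|Aᵢᴸ} ⊗ ρ_{C|Aᵢᴿ}`.
Because `Tr_C ρ_{C|Aᵢᴿ} = 𝟙`, the marginal `ρ_{B|A}` is block diagonal with blocks
`ρ_{B|Aᵢᴸ} ⊗ 𝟙`, and likewise `ρ_{C|A}` has blocks `𝟙 ⊗ ρ_{C|Aᵢᴿ}`. Blocks with different `i`
multiply to zero, and within one block the two factors act on different tensor factors, so
both products are `ρ_{B|Aᵢᴸ} ⊗ ρ_{C|Aᵢᴿ}` on each block.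
-/

open Matrix
open scoped ComplexOrder

noncomputable section

variable {b c a : Type*} [Fintype b] [DecidableEq b] [Fintype c] [DecidableEq c]
  [Fintype a] [DecidableEq a]

/-- Transport along an equality of indices of the direct-sum decomposition. -/
def castLR {ι : Type*} (L R : ι → Type*) {i j : ι} (h : i = j) (v : L i × R i) :
    L j × R j := h ▸ v

section Lift

variable {B C A : Type*} [Fintype B] [DecidableEq B] [Fintype C] [DecidableEq C] [Fintype A]
  (M : Matrix (B × A) (B × A) ℂ) (N : Matrix (C × A) (C × A) ℂ)

theorem liftB_mul_liftC_apply (x x' : B) (y y' : C) (u u' : A) :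
    (liftB (c := C) M * liftC (b := B) N) (x, y, u) (x', y', u') =
      ∑ v, M (x, u) (x', v) * N (y, v) (y', u') := by
  simp [Matrix.mul_apply, liftB, liftC, Fintype.sum_prod_type, ite_mul, mul_ite]

theorem liftC_mul_liftB_apply (x x' : B) (y y' : C) (u u' : A) :
    (liftC (b := B) N * liftB (c := C) M) (x, y, u) (x', y', u') =
      ∑ v, N (y, u) (y', v) * M (x, v) (x', u') := by
  simp [Matrix.mul_apply, liftB, liftC, Fintype.sum_prod_type, ite_mul, mul_ite]

end Lift

section Reindex

variable {B C A A' : Type*} (ρ : Matrix (B × C × A') (B × C × A') ℂ) (e : A ≃ A')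

theorem liftB_margBA_submatrix [Fintype C] [DecidableEq C] :
    liftB (c := C) (margBA (ρ.submatrix ((Equiv.refl B).prodCongr ((Equiv.refl C).prodCongr e))
      ((Equiv.refl B).prodCongr ((Equiv.refl C).prodCongr e)))) =
      (liftB (margBA ρ)).submatrix ((Equiv.refl B).prodCongr ((Equiv.refl C).prodCongr e))
        ((Equiv.refl B).prodCongr ((Equiv.refl C).prodCongr e)) :=
  rfl

theorem liftC_margCA_submatrix [Fintype B] [DecidableEq B] :
    liftC (b := B) (margCA (ρ.submatrix ((Equiv.refl B).prodCongr ((Equiv.refl C).prodCongr e))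
      ((Equiv.refl B).prodCongr ((Equiv.refl C).prodCongr e)))) =
      (liftC (margCA ρ)).submatrix ((Equiv.refl B).prodCongr ((Equiv.refl C).prodCongr e))
        ((Equiv.refl B).prodCongr ((Equiv.refl C).prodCongr e)) :=
  rfl

end Reindex

theorem Fintype.sum_sigma_eq_sum_fiber {ι M : Type*} [Fintype ι] [AddCommMonoid M] {κ : ι → Type*}
    [∀ i, Fintype (κ i)] (F : (Σ i, κ i) → M) (i : ι) (hF : ∀ j ≠ i, ∀ r, F ⟨j, r⟩ = 0) :
    ∑ s, F s = ∑ r, F ⟨i, r⟩ := by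
  rw [Fintype.sum_sigma, Fintype.sum_eq_single i fun j hj => Fintype.sum_eq_zero _ (hF j hj)]

section Block

variable {B C ι : Type*} [DecidableEq ι] {L R : ι → Type*}
  (ρB : ∀ i, Matrix (B × L i) (B × L i) ℂ) (ρC : ∀ i, Matrix (C × R i) (C × R i) ℂ)

def blockKron : Matrix (B × C × Σ i, L i × R i) (B × C × Σ i, L i × R i) ℂ :=
  Matrix.of fun p q =>
    if h : p.2.2.1 = q.2.2.1 then
      ρB q.2.2.1 (p.1, (castLR L R h p.2.2.2).1) (q.1, q.2.2.2.1) *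
      ρC q.2.2.1 (p.2.1, (castLR L R h p.2.2.2).2) (q.2.1, q.2.2.2.2)
    else 0

theorem blockKron_apply_self (x x' : B) (y y' : C) (i : ι) (p q : L i × R i) :
    blockKron ρB ρC (x, y, ⟨i, p⟩) (x', y', ⟨i, q⟩) =
      ρB i (x, p.1) (x', q.1) * ρC i (y, p.2) (y', q.2) := by
  simp [blockKron, castLR]

theorem blockKron_apply_of_ne (x x' : B) (y y' : C) {i j : ι} (hij : i ≠ j)
    (p : L i × R i) (q : L j × R j) :
    blockKron ρB ρC (x, y, ⟨i, p⟩) (x', y', ⟨j, q⟩) = 0 := by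
  simp [blockKron, hij]

theorem margBA_blockKron_apply_self [Fintype C] (x x' : B) (i : ι) (p q : L i × R i) :
    margBA (blockKron ρB ρC) (x, ⟨i, p⟩) (x', ⟨i, q⟩) =
      ρB i (x, p.1) (x', q.1) * ∑ y, ρC i (y, p.2) (y, q.2) := by
  simp [margBA, blockKron_apply_self, Finset.mul_sum]

theorem margCA_blockKron_apply_self [Fintype B] (y y' : C) (i : ι) (p q : L i × R i) :
    margCA (blockKron ρB ρC) (y, ⟨i, p⟩) (y', ⟨i, q⟩) =
      (∑ x, ρB i (x, p.1) (x, q.1)) * ρC i (y, p.2) (y', q.2) := by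
  simp [margCA, blockKron_apply_self, Finset.sum_mul]

theorem margBA_blockKron_apply_of_ne [Fintype C] (x x' : B) {i j : ι} (hij : i ≠ j)
    (p : L i × R i) (q : L j × R j) :
    margBA (blockKron ρB ρC) (x, ⟨i, p⟩) (x', ⟨j, q⟩) = 0 := by
  simp [margBA, blockKron_apply_of_ne _ _ _ _ _ _ hij]

theorem margCA_blockKron_apply_of_ne [Fintype B] (y y' : C) {i j : ι} (hij : i ≠ j)
    (p : L i × R i) (q : L j × R j) :
    margCA (blockKron ρB ρC) (y, ⟨i, p⟩) (y', ⟨j, q⟩) = 0 := by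
  simp [margCA, blockKron_apply_of_ne _ _ _ _ _ _ hij]

end Block

section BlockProduct

variable {B C ι : Type*} [DecidableEq ι] {L R : ι → Type*}
  {ρB : ∀ i, Matrix (B × L i) (B × L i) ℂ} {ρC : ∀ i, Matrix (C × R i) (C × R i) ℂ}

theorem margBA_blockKron_apply_self_of_partialTrace [Fintype C] [∀ i, DecidableEq (R i)]
    (hCtr : ∀ i, (Matrix.of fun r r' : R i => ∑ y : C, ρC i (y, r) (y, r')) = 1)
    (x x' : B) (i : ι) (p q : L i × R i) :
    margBA (blockKron ρB ρC) (x, ⟨i, p⟩) (x', ⟨i, q⟩) =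
      if p.2 = q.2 then ρB i (x, p.1) (x', q.1) else 0 := by
  have htr := congrFun₂ (hCtr i) p.2 q.2
  simp only [of_apply, one_apply] at htr
  rw [margBA_blockKron_apply_self, htr, mul_ite, mul_one, mul_zero]

theorem margCA_blockKron_apply_self_of_partialTrace [Fintype B] [∀ i, DecidableEq (L i)]
    (hBtr : ∀ i, (Matrix.of fun l l' : L i => ∑ x : B, ρB i (x, l) (x, l')) = 1)
    (y y' : C) (i : ι) (p q : L i × R i) :
    margCA (blockKron ρB ρC) (y, ⟨i, p⟩) (y', ⟨i, q⟩) =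
      if p.1 = q.1 then ρC i (y, p.2) (y', q.2) else 0 := by
  have htr := congrFun₂ (hBtr i) p.1 q.1
  simp only [of_apply, one_apply] at htr
  rw [margCA_blockKron_apply_self, htr, ite_mul, one_mul, zero_mul]

variable [Fintype B] [DecidableEq B] [Fintype C] [DecidableEq C] [Fintype ι]
  [∀ i, Fintype (L i)] [∀ i, DecidableEq (L i)] [∀ i, Fintype (R i)] [∀ i, DecidableEq (R i)]
  (hBtr : ∀ i, (Matrix.of fun l l' : L i => ∑ x : B, ρB i (x, l) (x, l')) = 1)
  (hCtr : ∀ i, (Matrix.of fun r r' : R i => ∑ y : C, ρC i (y, r) (y, r')) = 1)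
include hBtr hCtr

theorem liftB_margBA_mul_liftC_margCA_blockKron :
    liftB (margBA (blockKron ρB ρC)) * liftC (margCA (blockKron ρB ρC)) = blockKron ρB ρC := by
  ext ⟨x, y, i, p⟩ ⟨x', y', j, q⟩
  rw [liftB_mul_liftC_apply, Fintype.sum_sigma_eq_sum_fiber _ i fun k hk r => by
    rw [margBA_blockKron_apply_of_ne _ _ _ _ hk.symm, zero_mul]]
  rcases eq_or_ne i j with rfl | hij
  · simp [margBA_blockKron_apply_self_of_partialTrace hCtr,
      margCA_blockKron_apply_self_of_partialTrace hBtr, blockKron_apply_self,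
      Fintype.sum_prod_type, ite_mul, mul_ite]
  · simp [margCA_blockKron_apply_of_ne _ _ _ _ hij, blockKron_apply_of_ne _ _ _ _ _ _ hij]

theorem liftC_margCA_mul_liftB_margBA_blockKron :
    liftC (margCA (blockKron ρB ρC)) * liftB (margBA (blockKron ρB ρC)) = blockKron ρB ρC := by
  ext ⟨x, y, i, p⟩ ⟨x', y', j, q⟩
  rw [liftC_mul_liftB_apply, Fintype.sum_sigma_eq_sum_fiber _ i fun k hk r => by
    rw [margCA_blockKron_apply_of_ne _ _ _ _ hk.symm, zero_mul]]
  rcases eq_or_ne i j with rfl | hij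
  · simp [margBA_blockKron_apply_self_of_partialTrace hCtr,
      margCA_blockKron_apply_self_of_partialTrace hBtr, blockKron_apply_self,
      Fintype.sum_prod_type, ite_mul, mul_ite, mul_comm]
  · simp [margBA_blockKron_apply_of_ne _ _ _ _ hij, blockKron_apply_of_ne _ _ _ _ _ _ hij]

end BlockProduct

theorem stmt9_general {ι : Type*} [Fintype ι] [DecidableEq ι]
    (L R : ι → Type*) [∀ i, Fintype (L i)] [∀ i, DecidableEq (L i)]
    [∀ i, Fintype (R i)] [∀ i, DecidableEq (R i)]
    (e : a ≃ Σ i : ι, L i × R i)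
    (ρB : ∀ i, Matrix (b × L i) (b × L i) ℂ)
    (ρC : ∀ i, Matrix (c × R i) (c × R i) ℂ)
    (hBtr : ∀ i, (Matrix.of fun l l' : L i => ∑ x : b, ρB i (x, l) (x, l')) = 1)
    (hCtr : ∀ i, (Matrix.of fun r r' : R i => ∑ y : c, ρC i (y, r) (y, r')) = 1)
    (ρ : Matrix (b × c × a) (b × c × a) ℂ)
    (hρ : ρ = Matrix.of fun p q =>
      if h : (e p.2.2).1 = (e q.2.2).1 then
        ρB (e q.2.2).1 (p.1, (castLR L R h (e p.2.2).2).1) (q.1, (e q.2.2).2.1) *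
        ρC (e q.2.2).1 (p.2.1, (castLR L R h (e p.2.2).2).2) (q.2.1, (e q.2.2).2.2)
      else 0) :
    liftB (margBA ρ) * liftC (margCA ρ) = liftC (margCA ρ) * liftB (margBA ρ) ∧
    liftB (margBA ρ) * liftC (margCA ρ) = ρ := by
  set E := (Equiv.refl b).prodCongr ((Equiv.refl c).prodCongr e)
  have hρE : ρ = (blockKron ρB ρC).submatrix E E := hρ
  have hBC : liftB (margBA ρ) * liftC (margCA ρ) = ρ := by
    rw [hρE, liftB_margBA_submatrix, liftC_margCA_submatrix, submatrix_mul_equiv,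
      liftB_margBA_mul_liftC_margCA_blockKron hBtr hCtr]
  have hCB : liftC (margCA ρ) * liftB (margBA ρ) = ρ := by
    rw [hρE, liftB_margBA_submatrix, liftC_margCA_submatrix, submatrix_mul_equiv,
      liftC_margCA_mul_liftB_margBA_blockKron hBtr hCtr]
  exact ⟨hBC.trans hCB.symm, hBC⟩

/-- Direction (4) ⇒ (2) of the quantum conditional independence theorem:
if `ρ_{BC|A}` is block diagonal with respect to a direct-sum decomposition
`𝓗_A = ⊕ᵢ 𝓗_{Aᵢᴸ} ⊗ 𝓗_{Aᵢᴿ}` (encoded by the equivalence `e`), with the block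
for subspace `i` of the product form `ρ_{B|Aᵢᴸ} ⊗ ρ_{C|Aᵢᴿ}` for channels
`ρ_{B|Aᵢᴸ}`, `ρ_{C|Aᵢᴿ}`, then the marginals `ρ_{B|A}` and `ρ_{C|A}` commute
and their product is `ρ_{BC|A}`. -/
theorem stmt9 {ι : Type*} [Fintype ι] [DecidableEq ι]
    (L R : ι → Type*) [∀ i, Fintype (L i)] [∀ i, DecidableEq (L i)]
    [∀ i, Fintype (R i)] [∀ i, DecidableEq (R i)]
    (e : a ≃ Σ i : ι, L i × R i)
    (ρB : ∀ i, Matrix (b × L i) (b × L i) ℂ)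
    (ρC : ∀ i, Matrix (c × R i) (c × R i) ℂ)
    (hBpos : ∀ i, (ρB i).PosSemidef)
    (hCpos : ∀ i, (ρC i).PosSemidef)
    (hBtr : ∀ i, (Matrix.of fun l l' : L i => ∑ x : b, ρB i (x, l) (x, l')) = 1)
    (hCtr : ∀ i, (Matrix.of fun r r' : R i => ∑ y : c, ρC i (y, r) (y, r')) = 1)
    (ρ : Matrix (b × c × a) (b × c × a) ℂ)
    (hρ : ρ = Matrix.of fun p q =>
      if h : (e p.2.2).1 = (e q.2.2).1 then
        ρB (e q.2.2).1 (p.1, (castLR L R h (e p.2.2).2).1) (q.1, (e q.2.2).2.1) *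
        ρC (e q.2.2).1 (p.2.1, (castLR L R h (e p.2.2).2).2) (q.2.1, (e q.2.2).2.2)
      else 0) :
    liftB (margBA ρ) * liftC (margCA ρ) = liftC (margCA ρ) * liftB (margBA ρ) ∧
    liftB (margBA ρ) * liftC (margCA ρ) = ρ :=
  stmt9_general L R e ρB ρC hBtr hCtr ρ hρ

end
end

section
/- Let U be a unitary on 𝓗_B ⊗ 𝓗_F ⊗ 𝓗_C ≅ 𝓗_{L_B} ⊗ 𝓗_A ⊗ 𝓗_{L_C} (all finite-dimensional), and let ρ̂ᵘ be the normalized Choi-Jamiołkowski state of U on (𝓗_B ⊗ 𝓗_F ⊗ 𝓗_C) ⊗ (𝓗_{L_B} ⊗ 𝓗_A ⊗ 𝓗_{L_C})*, i.e. ρ̂ᵘ = (1/(d_{L_B} d_A d_{L_C})) Σ |U e_i⟩⟨U e_j| ⊗ |e_i⟩⟨e_j|. Then I(B : FC | L_B A L_C) = 0 and I(L_B : L_C | A) = 0 when evaluated on ρ̂ᵘ. -/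
/-!
Every marginal of `ρ̂ᵘ` occurring here is a scalar multiple of an orthogonal projection, and a
Hermitian `A` with `A * A = c • A` and trace `1` has spectrum in `{0, c}`, hence entropy `-log c`.
Tracing out an output factor `γ` leaves `κ • V * Vᴴ` with `κ = 1 / d_in`, where `V` is `U`
reshaped so that `γ` indexes its columns; `U * Uᴴ = 1` makes the columns of `V` orthogonal of
equal norm, so the marginal has entropy `log d_γ`. Tracing out all outputs leaves `κ • 1` because
`Uᴴ * U = 1`, so the input marginals are maximally mixed. Thus `S(ρ̂ᵘ) = 0`,
`S(B L_B A L_C) = log d_F d_C`, `S(F C L_B A L_C) = log d_B`, `S(L_B A L_C) = log d_in`, and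
`S(X) = log d_X` for `X = L_B A, A L_C, A`; both conditional mutual informations vanish because
`d_B d_F d_C = d_in`.
-/

open Matrix

noncomputable section

namespace Matrix

variable {ι R : Type*}

theorem IsHermitian.eigenvalues_eq_zero_or_eq_of_mul_self {𝕜 n : Type*} [RCLike 𝕜] [Fintype n]
    [DecidableEq n] {A : Matrix n n 𝕜} (hA : A.IsHermitian) {c : ℝ} (h : A * A = (c : 𝕜) • A)
    (i : n) : hA.eigenvalues i = 0 ∨ hA.eigenvalues i = c := by
  set v := ⇑(hA.eigenvectorBasis i)
  set μ := hA.eigenvalues i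
  have hv : v ≠ 0 := (WithLp.ofLp_eq_zero 2).ne.2 <| hA.eigenvectorBasis.orthonormal.ne_zero i
  have hAv : A *ᵥ v = (μ : 𝕜) • v := by
    rw [hA.mulVec_eigenvectorBasis i, RCLike.real_smul_eq_coe_smul (K := 𝕜)]
  have hμ : ((μ * μ : ℝ) : 𝕜) • v = ((c * μ : ℝ) : 𝕜) • v := by
    calc ((μ * μ : ℝ) : 𝕜) • v = (A * A) *ᵥ v := by
          rw [← mulVec_mulVec, hAv, mulVec_smul, hAv, smul_smul, RCLike.ofReal_mul]
      _ = ((c * μ : ℝ) : 𝕜) • v := by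
          rw [h, smul_mulVec, hAv, smul_smul, RCLike.ofReal_mul]
  exact (mul_eq_mul_right_iff.mp (RCLike.ofReal_inj.mp (smul_left_injective 𝕜 hv hμ))).symm

/-- The marginal on `β × ι` of the Choi state of `W` is proportional to
`reshapeOutput W * (reshapeOutput W)ᴴ`. -/
def reshapeOutput {β γ : Type*} (W : Matrix (β × γ) ι R) : Matrix (β × ι) γ R :=
  of fun p c => W (p.1, c) p.2

theorem reshapeOutput_conjTranspose_mul_self {β γ : Type*} [Fintype β] [Fintype ι]
    [DecidableEq β] [DecidableEq γ] [CommSemiring R] [StarRing R] (W : Matrix (β × γ) ι R)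
    (hW : W * Wᴴ = 1) :
    (reshapeOutput W)ᴴ * reshapeOutput W = (Fintype.card β : R) • 1 := by
  ext c c'
  have hWW : ∀ b, ∑ s, star (W (b, c) s) * W (b, c') s = (1 : Matrix _ _ R) (b, c') (b, c) := by
    intro b
    simp_rw [← hW, mul_apply, conjTranspose_apply, mul_comm]
  simp only [reshapeOutput, mul_apply, conjTranspose_apply, of_apply, Fintype.sum_prod_type, hWW]
  simp [one_apply, eq_comm]

theorem submatrix_mul_conjTranspose_submatrix_eq_one {o β : Type*} [Fintype ι] [DecidableEq o]
    [DecidableEq β] [NonAssocSemiring R] [StarRing R] {U : Matrix o ι R} (hU : U * Uᴴ = 1)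
    {e : β → o} (he : Function.Injective e) :
    U.submatrix e id * (U.submatrix e id)ᴴ = 1 := by
  rw [conjTranspose_submatrix, ← submatrix_mul _ _ _ _ _ Function.bijective_id, hU,
    submatrix_one _ he]

theorem sum_mul_star_of_conjTranspose_mul_self {o : Type*} [Fintype o] [DecidableEq ι]
    [CommSemiring R] [StarRing R] {U : Matrix o ι R} (hU : Uᴴ * U = 1) (s t : ι) :
    ∑ x, U x s * star (U x t) = (1 : Matrix ι ι R) s t := by
  rw [← transpose_one, transpose_apply, ← hU]
  simp_rw [mul_apply, conjTranspose_apply, mul_comm]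

end Matrix

section Entropy

variable {n ι : Type*} [Fintype n] [DecidableEq n]

theorem vnEntropy_of_mul_self_eq_smul {A : Matrix n n ℂ} (hA : A.IsHermitian) {c : ℝ}
    (h : A * A = (c : ℂ) • A) : vnEntropy A = -(A.trace.re * Real.log c) := by
  have htr : A.trace.re = ∑ i, hA.eigenvalues i := by
    simp [hA.trace_eq_sum_eigenvalues]
  rw [vnEntropy, dif_pos hA, htr, Finset.sum_mul, ← Finset.sum_neg_distrib]
  refine Finset.sum_congr rfl fun i _ => ?_
  rcases hA.eigenvalues_eq_zero_or_eq_of_mul_self h i with h0 | hc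
  · simp [h0]
  · simp [hc, Real.negMulLog]

theorem vnEntropy_zero : vnEntropy (0 : Matrix n n ℂ) = 0 := by
  simpa using vnEntropy_of_mul_self_eq_smul isHermitian_zero (c := 0) (by simp)

theorem vnEntropy_smul_mul_conjTranspose [Fintype ι] [DecidableEq ι] (V : Matrix n ι ℂ)
    {κ g : ℝ} (hV : Vᴴ * V = (g : ℂ) • 1) (hκ : κ * g * Fintype.card ι = 1) :
    vnEntropy ((κ : ℂ) • (V * Vᴴ)) = Real.log (Fintype.card ι) := by
  have hA : ((κ : ℂ) • (V * Vᴴ)).IsHermitian := by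
    simp [IsHermitian, conjTranspose_smul, conjTranspose_mul]
  have hsq : (κ : ℂ) • (V * Vᴴ) * ((κ : ℂ) • (V * Vᴴ)) =
      ((κ * g : ℝ) : ℂ) • ((κ : ℂ) • (V * Vᴴ)) := by
    rw [smul_mul_smul, Matrix.mul_assoc, ← Matrix.mul_assoc Vᴴ, hV]
    simp only [Matrix.smul_mul, Matrix.mul_smul, Matrix.one_mul, smul_smul]
    congr 1; push_cast; ring
  have htr : ((κ : ℂ) • (V * Vᴴ)).trace.re = 1 := by
    rw [trace_smul, trace_mul_comm, hV, trace_smul, trace_one]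
    simpa [← mul_assoc] using hκ
  have hκg : κ * g = (Fintype.card ι : ℝ)⁻¹ := eq_inv_of_mul_eq_one_left hκ
  rw [vnEntropy_of_mul_self_eq_smul hA hsq, htr, hκg, Real.log_inv]
  ring

theorem vnEntropy_smul_reshapeOutput {β γ : Type*} [Fintype β] [DecidableEq β] [Fintype γ]
    [DecidableEq γ] [Fintype ι] [DecidableEq ι] (W : Matrix (β × γ) ι ℂ) (hW : W * Wᴴ = 1)
    {κ : ℝ} (hκ : κ * Fintype.card (β × γ) = 1) :
    vnEntropy ((κ : ℂ) • (reshapeOutput W * (reshapeOutput W)ᴴ)) = Real.log (Fintype.card γ) :=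
  vnEntropy_smul_mul_conjTranspose _ (reshapeOutput_conjTranspose_mul_self W hW)
    (by simpa [Fintype.card_prod, mul_assoc] using hκ)

theorem vnEntropy_smul_one {c : ℝ} (hc : c * Fintype.card n = 1) :
    vnEntropy ((c : ℂ) • (1 : Matrix n n ℂ)) = Real.log (Fintype.card n) := by
  simpa using vnEntropy_smul_mul_conjTranspose (1 : Matrix n n ℂ) (g := 1) (by simp)
    (by simpa using hc)

end Entropy

/-- For a unitary `U` from `𝓗_{L_B} ⊗ 𝓗_A ⊗ 𝓗_{L_C}` to `𝓗_B ⊗ 𝓗_F ⊗ 𝓗_C`, the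
normalized Choi–Jamiołkowski state `ρ̂ᵘ` satisfies `I(B : FC | L_B A L_C) = 0` and
`I(L_B : L_C | A) = 0`, where the conditional mutual informations are computed via
von Neumann entropies of the indicated marginals (partial traces) of `ρ̂ᵘ`. -/
theorem stmt12 {bb ff cc lb aa lc : Type*}
    [Fintype bb] [DecidableEq bb] [Fintype ff] [DecidableEq ff]
    [Fintype cc] [DecidableEq cc] [Fintype lb] [DecidableEq lb]
    [Fintype aa] [DecidableEq aa] [Fintype lc] [DecidableEq lc]
    (U : Matrix (bb × ff × cc) (lb × aa × lc) ℂ)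
    (hU₁ : U * Uᴴ = 1) (hU₂ : Uᴴ * U = 1)
    (ρ : Matrix ((bb × ff × cc) × (lb × aa × lc)) ((bb × ff × cc) × (lb × aa × lc)) ℂ)
    (hρ : ρ = ((Fintype.card lb * Fintype.card aa * Fintype.card lc : ℂ))⁻¹ •
      Matrix.of fun p q => U p.1 p.2 * star (U q.1 q.2)) :
    -- marginals of ρ̂ᵘ
    (let ρ_B_in : Matrix (bb × (lb × aa × lc)) (bb × (lb × aa × lc)) ℂ :=
      Matrix.of fun p q => ∑ yf : ff, ∑ yc : cc, ρ ((p.1, yf, yc), p.2) ((q.1, yf, yc), q.2);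
    let ρ_FC_in : Matrix ((ff × cc) × (lb × aa × lc)) ((ff × cc) × (lb × aa × lc)) ℂ :=
      Matrix.of fun p q =>
        ∑ xb : bb, ρ ((xb, p.1.1, p.1.2), p.2) ((xb, q.1.1, q.1.2), q.2);
    let ρ_in : Matrix (lb × aa × lc) (lb × aa × lc) ℂ :=
      Matrix.of fun s t => ∑ o : bb × ff × cc, ρ (o, s) (o, t);
    let ρ_LB_A : Matrix (lb × aa) (lb × aa) ℂ :=
      Matrix.of fun p q =>
        ∑ o : bb × ff × cc, ∑ m : lc, ρ (o, (p.1, p.2, m)) (o, (q.1, q.2, m));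
    let ρ_A_LC : Matrix (aa × lc) (aa × lc) ℂ :=
      Matrix.of fun p q =>
        ∑ o : bb × ff × cc, ∑ l : lb, ρ (o, (l, p.1, p.2)) (o, (l, q.1, q.2));
    let ρ_A : Matrix aa aa ℂ :=
      Matrix.of fun s t =>
        ∑ o : bb × ff × cc, ∑ l : lb, ∑ m : lc, ρ (o, (l, s, m)) (o, (l, t, m));
    -- I(B : FC | L_B A L_C) = 0
    vnEntropy ρ_B_in + vnEntropy ρ_FC_in - vnEntropy ρ - vnEntropy ρ_in = 0 ∧
    -- I(L_B : L_C | A) = 0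
    vnEntropy ρ_LB_A + vnEntropy ρ_A_LC - vnEntropy ρ_in - vnEntropy ρ_A = 0) := by
  set κ : ℝ := (Fintype.card (lb × aa × lc) : ℝ)⁻¹
  replace hρ : ρ = (κ : ℂ) • of fun p q => U p.1 p.2 * star (U q.1 q.2) := by
    simp [hρ, κ, Fintype.card_prod, mul_assoc]
  intro ρ_B_in ρ_FC_in ρ_in ρ_LB_A ρ_A_LC ρ_A
  have hcol : ∀ s t, ∑ o, U o s * starRingEnd ℂ (U o t) = (1 : Matrix _ _ ℂ) s t :=
    sum_mul_star_of_conjTranspose_mul_self hU₂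
  have h_pure : ρ = (κ : ℂ) • (reshapeOutput (U.submatrix (Prod.fst : _ × Unit → _) id) *
      (reshapeOutput (U.submatrix (Prod.fst : _ × Unit → _) id))ᴴ) := by
    ext; simp [hρ, reshapeOutput, mul_apply]
  have h_B_in : ρ_B_in = (κ : ℂ) • (reshapeOutput U * (reshapeOutput U)ᴴ) := by
    ext; simp [ρ_B_in, hρ, reshapeOutput, mul_apply, Fintype.sum_prod_type, Finset.mul_sum]
  have h_FC_in : ρ_FC_in = (κ : ℂ) • (reshapeOutput (U.submatrix Prod.swap id) *
      (reshapeOutput (U.submatrix Prod.swap id))ᴴ) := by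
    ext; simp [ρ_FC_in, hρ, reshapeOutput, mul_apply, Finset.mul_sum]
  have h_in : ρ_in = (κ : ℂ) • 1 := by
    ext; simp [ρ_in, hρ, ← Finset.mul_sum, hcol]
  have h_LB_A : ρ_LB_A = ((κ * Fintype.card lc : ℝ) : ℂ) • 1 := by
    ext ⟨l, a⟩ ⟨l', a'⟩
    simp [ρ_LB_A, hρ, Finset.sum_comm (γ := bb × ff × cc), ← Finset.mul_sum, hcol, one_apply,
      mul_comm]
  have h_A_LC : ρ_A_LC = ((κ * Fintype.card lb : ℝ) : ℂ) • 1 := by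
    ext ⟨a, m⟩ ⟨a', m'⟩
    simp [ρ_A_LC, hρ, Finset.sum_comm (γ := bb × ff × cc), ← Finset.mul_sum, hcol, one_apply,
      mul_comm]
  have h_A : ρ_A = ((κ * (Fintype.card lb * Fintype.card lc) : ℝ) : ℂ) • 1 := by
    ext
    simp [ρ_A, hρ, Finset.sum_comm (γ := bb × ff × cc), ← Finset.mul_sum, hcol, one_apply]
  rw [h_B_in, h_FC_in, h_pure, h_in, h_LB_A, h_A_LC, h_A]
  rcases isEmpty_or_nonempty (lb × aa × lc) with hin | hin
  · -- `κ = 0⁻¹ = 0`, so every marginal vanishes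
    simp [κ, vnEntropy_zero]
  have hcard := square_of_invertible U Uᴴ hU₁ hU₂
  obtain ⟨_, _, _⟩ : Nonempty lb ∧ Nonempty aa ∧ Nonempty lc := by simpa [nonempty_prod] using hin
  have : Nonempty (bb × ff × cc) := Fintype.card_pos_iff.mp (hcard ▸ Fintype.card_pos)
  obtain ⟨_, _, _⟩ : Nonempty bb ∧ Nonempty ff ∧ Nonempty cc := by simpa [nonempty_prod] using this
  have hκ_in : κ * Fintype.card (lb × aa × lc) = 1 := inv_mul_cancel₀ (by positivity)
  have hκ_out : κ * Fintype.card (bb × ff × cc) = 1 := by rw [hcard]; exact hκ_in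
  rw [vnEntropy_smul_reshapeOutput _ hU₁ hκ_out,
    vnEntropy_smul_reshapeOutput _
      (submatrix_mul_conjTranspose_submatrix_eq_one hU₁ Prod.swap_injective) ?_,
    vnEntropy_smul_reshapeOutput _
      (submatrix_mul_conjTranspose_submatrix_eq_one hU₁ Prod.fst_injective) ?_,
    vnEntropy_smul_one hκ_in, vnEntropy_smul_one ?_, vnEntropy_smul_one ?_,
    vnEntropy_smul_one ?_]
  all_goals simp only [Fintype.card_prod, Fintype.card_unique, Nat.cast_mul, Nat.cast_one]
    at hκ_in hκ_out ⊢
  · have hlog := congrArg (fun d : ℕ => Real.log d) hcard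
    simp [Fintype.card_prod, Real.log_mul] at hlog ⊢
    linarith
  -- each remaining goal says that `κ` times the input or output dimension is `1`
  all_goals first | linear_combination hκ_in | linear_combination hκ_out

end
end

section
/- Let (Λ, Σ) be a measurable space with probability measures μ, ν, χ. Suppose there are measurable functions p₁, p₂, p₃ : Λ → [0,1] with p₁ + p₂ + p₃ = 1 pointwise, and ∫ p₁ dμ ≤ ε, ∫ p₂ dν ≤ ε, ∫ p₃ dχ ≤ ε for some ε ∈ [0,1). Fix κ ∈ (2ε, 1). Then for every Ω ∈ Σ with ν(Ω) > 1 − ε/κ and χ(Ω) > 1 − ε/κ, there exist Ω′, Ω″ ∈ Σ such that ν(Ω′) > 1 − 2ε/κ, χ(Ω″) > 1 − 2ε/κ, and μ(Ω) ≥ (1 − κ)(μ(Ω′) + μ(Ω″)) − ε. -/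
/-!
By Markov's inequality, `p₂ ≥ κ` on a set of `ν`-mass at most `ε / κ`; removing it from `Ω` leaves
`Ω'` with `ν(Ω') > 1 - 2ε/κ` on which `1 - p₂ > 1 - κ`, so `(1 - κ) μ(Ω') ≤ ∫_Ω (1 - p₂) dμ`;
likewise for `Ω''`, `χ` and `p₃`. Since `p₁ + p₂ + p₃ = 1`,
`μ(Ω) = ∫_Ω (1 - p₂) dμ + ∫_Ω (1 - p₃) dμ - ∫_Ω p₁ dμ`, and the last integral is at most `ε`.
-/

open MeasureTheory

section

variable {Λ : Type*} [MeasurableSpace Λ]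

lemma Measurable.integrable_of_nonneg_of_le_one {m : Measure Λ} [IsFiniteMeasure m] {f : Λ → ℝ}
    (hf : Measurable f) (h0 : ∀ l, 0 ≤ f l) (h1 : ∀ l, f l ≤ 1) : Integrable f m :=
  Integrable.of_bound hf.aestronglyMeasurable 1
    (ae_of_all _ fun l => abs_le.2 ⟨by linarith [h0 l], h1 l⟩)

lemma sub_div_lt_measureReal_sdiff_setOf_le {m : Measure Λ} [IsFiniteMeasure m] {f : Λ → ℝ}
    (hf0 : ∀ l, 0 ≤ f l) (hfi : Integrable f m) {ε κ a : ℝ} (hκ : 0 < κ)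
    (hint : ∫ l, f l ∂m ≤ ε) {s : Set Λ} (hs : a < m.real s) :
    a - ε / κ < m.real (s \ {l | κ ≤ f l}) := by
  have markov : m.real {l | κ ≤ f l} ≤ ε / κ := by
    rw [le_div_iff₀ hκ, mul_comm]
    exact (mul_meas_ge_le_integral_of_nonneg (ae_of_all m hf0) hfi κ).trans hint
  linarith [le_measureReal_sdiff (μ := m) (s₁ := s) (s₂ := {l | κ ≤ f l})]

lemma one_sub_mul_measureReal_sdiff_setOf_le_le {μ : Measure Λ} [IsFiniteMeasure μ]
    {p : Λ → ℝ} (hp : Measurable p) (hp0 : ∀ l, 0 ≤ p l) (hp1 : ∀ l, p l ≤ 1) (κ : ℝ)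
    {Ω : Set Λ} (hΩ : MeasurableSet Ω) :
    (1 - κ) * μ.real (Ω \ {l | κ ≤ p l}) ≤ μ.real Ω - ∫ l in Ω, p l ∂μ := by
  have hpi : Integrable p μ := hp.integrable_of_nonneg_of_le_one hp0 hp1
  have hgi : Integrable (fun l => 1 - p l) μ := (integrable_const 1).sub hpi
  have hlt : ∀ l ∈ Ω \ {l | κ ≤ p l}, 1 - κ ≤ 1 - p l := fun l hl => by
    simp only [Set.mem_sdiff, Set.mem_ofPred_eq, not_le] at hl
    linarith [hl.2]
  calc (1 - κ) * μ.real (Ω \ {l | κ ≤ p l})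
      ≤ ∫ l in Ω \ {l | κ ≤ p l}, (1 - p l) ∂μ :=
        setIntegral_ge_of_const_le_real (hΩ.diff (measurableSet_le measurable_const hp))
          (measure_ne_top _ _) hlt hgi.integrableOn
    _ ≤ ∫ l in Ω, (1 - p l) ∂μ :=
        setIntegral_mono_set hgi.integrableOn (ae_of_all _ fun l => sub_nonneg.2 (hp1 l))
          Set.sdiff_subset.eventuallyLE
    _ = μ.real Ω - ∫ l in Ω, p l ∂μ := by
        rw [integral_sub (integrable_const 1) hpi.integrableOn,
          setIntegral_const, smul_eq_mul, mul_one]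

end

theorem stmt17_general {Λ : Type*} [MeasurableSpace Λ] (μ ν χ : Measure Λ)
    [IsProbabilityMeasure μ] [IsProbabilityMeasure ν] [IsProbabilityMeasure χ]
    (p₁ p₂ p₃ : Λ → ℝ)
    (hm₁ : Measurable p₁) (hm₂ : Measurable p₂) (hm₃ : Measurable p₃)
    (h₁0 : ∀ l, 0 ≤ p₁ l)
    (h₂0 : ∀ l, 0 ≤ p₂ l)
    (h₃0 : ∀ l, 0 ≤ p₃ l)
    (hsum : ∀ l, p₁ l + p₂ l + p₃ l = 1)
    (ε : ℝ) (hε0 : 0 ≤ ε)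
    (hμ : ∫ l, p₁ l ∂μ ≤ ε) (hν : ∫ l, p₂ l ∂ν ≤ ε) (hχ : ∫ l, p₃ l ∂χ ≤ ε)
    (κ : ℝ) (hκ0 : 2 * ε < κ)
    (Ω : Set Λ) (hΩ : MeasurableSet Ω)
    (hνΩ : 1 - ε / κ < (ν Ω).toReal) (hχΩ : 1 - ε / κ < (χ Ω).toReal) :
    ∃ Ω' Ω'' : Set Λ, MeasurableSet Ω' ∧ MeasurableSet Ω'' ∧
      1 - 2 * ε / κ < (ν Ω').toReal ∧ 1 - 2 * ε / κ < (χ Ω'').toReal ∧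
      (1 - κ) * ((μ Ω').toReal + (μ Ω'').toReal) - ε ≤ (μ Ω).toReal := by
  have hκ : 0 < κ := by linarith
  have h₁1 : ∀ l, p₁ l ≤ 1 := fun l => by linarith [hsum l, h₂0 l, h₃0 l]
  have h₂1 : ∀ l, p₂ l ≤ 1 := fun l => by linarith [hsum l, h₁0 l, h₃0 l]
  have h₃1 : ∀ l, p₃ l ≤ 1 := fun l => by linarith [hsum l, h₁0 l, h₂0 l]
  have i₁ : Integrable p₁ μ := hm₁.integrable_of_nonneg_of_le_one h₁0 h₁1
  have i₂ : Integrable p₂ μ := hm₂.integrable_of_nonneg_of_le_one h₂0 h₂1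
  have i₃ : Integrable p₃ μ := hm₃.integrable_of_nonneg_of_le_one h₃0 h₃1
  have partition : ∫ l in Ω, p₁ l ∂μ + ∫ l in Ω, p₂ l ∂μ + ∫ l in Ω, p₃ l ∂μ = μ.real Ω := by
    rw [← integral_add i₁.integrableOn i₂.integrableOn,
      ← integral_add (f := fun l => p₁ l + p₂ l) (i₁.add i₂).integrableOn i₃.integrableOn]
    simp only [hsum, setIntegral_const, smul_eq_mul, mul_one]
  have hΩp₁ : ∫ l in Ω, p₁ l ∂μ ≤ ε := (setIntegral_le_integral i₁ (ae_of_all _ h₁0)).trans hμ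
  have hν' := sub_div_lt_measureReal_sdiff_setOf_le h₂0
    (hm₂.integrable_of_nonneg_of_le_one h₂0 h₂1) hκ hν hνΩ
  have hχ' := sub_div_lt_measureReal_sdiff_setOf_le h₃0
    (hm₃.integrable_of_nonneg_of_le_one h₃0 h₃1) hκ hχ hχΩ
  have hμ₂ := one_sub_mul_measureReal_sdiff_setOf_le_le (μ := μ) hm₂ h₂0 h₂1 κ hΩ
  have hμ₃ := one_sub_mul_measureReal_sdiff_setOf_le_le (μ := μ) hm₃ h₃0 h₃1 κ hΩ
  simp only [← measureReal_def]
  refine ⟨Ω \ {l | κ ≤ p₂ l}, Ω \ {l | κ ≤ p₃ l}, hΩ.diff (measurableSet_le measurable_const hm₂),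
    hΩ.diff (measurableSet_le measurable_const hm₃), ?_, ?_, ?_⟩
  · linarith [show 2 * ε / κ = ε / κ + ε / κ by ring]
  · linarith [show 2 * ε / κ = ε / κ + ε / κ by ring]
  · linarith

theorem stmt17 {Λ : Type*} [MeasurableSpace Λ] (μ ν χ : Measure Λ)
    [IsProbabilityMeasure μ] [IsProbabilityMeasure ν] [IsProbabilityMeasure χ]
    (p₁ p₂ p₃ : Λ → ℝ)
    (hm₁ : Measurable p₁) (hm₂ : Measurable p₂) (hm₃ : Measurable p₃)
    (h₁0 : ∀ l, 0 ≤ p₁ l) (h₁1 : ∀ l, p₁ l ≤ 1)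
    (h₂0 : ∀ l, 0 ≤ p₂ l) (h₂1 : ∀ l, p₂ l ≤ 1)
    (h₃0 : ∀ l, 0 ≤ p₃ l) (h₃1 : ∀ l, p₃ l ≤ 1)
    (hsum : ∀ l, p₁ l + p₂ l + p₃ l = 1)
    (ε : ℝ) (hε0 : 0 ≤ ε) (hε1 : ε < 1)
    (hμ : ∫ l, p₁ l ∂μ ≤ ε) (hν : ∫ l, p₂ l ∂ν ≤ ε) (hχ : ∫ l, p₃ l ∂χ ≤ ε)
    (κ : ℝ) (hκ0 : 2 * ε < κ) (hκ1 : κ < 1)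
    (Ω : Set Λ) (hΩ : MeasurableSet Ω)
    (hνΩ : 1 - ε / κ < (ν Ω).toReal) (hχΩ : 1 - ε / κ < (χ Ω).toReal) :
    ∃ Ω' Ω'' : Set Λ, MeasurableSet Ω' ∧ MeasurableSet Ω'' ∧
      1 - 2 * ε / κ < (ν Ω').toReal ∧ 1 - 2 * ε / κ < (χ Ω'').toReal ∧
      (1 - κ) * ((μ Ω').toReal + (μ Ω'').toReal) - ε ≤ (μ Ω).toReal :=
  stmt17_general μ ν χ p₁ p₂ p₃ hm₁ hm₂ hm₃ h₁0 h₂0 h₃0 hsum ε hε0 hμ hν hχ κ hκ0 Ω hΩ hνΩ hχΩ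
end

section
/- Let (Λ, Σ) be a measurable space, and let γ : Σ × Λ → [0,1] be a Markov kernel (for each λ, γ(·|λ) is a probability measure; for each Ω ∈ Σ, γ(Ω|·) is measurable). Let μ′, χ be probability measures and define their push-forwards μ(Ω) := ∫ γ(Ω|λ) dμ′(λ), ν(Ω) := ∫ γ(Ω|λ) dχ(λ). Fix 0 ≤ ε ≤ δ < 1 with δ > 0. Then for every Ω ∈ Σ with ν(Ω) > 1 − ε, there exists Ω′ ∈ Σ with χ(Ω′) > 1 − δ and μ(Ω) ≥ (1 − ε/δ)·μ′(Ω′). -/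
/-!
Put `f λ := γ(Ω|λ)` and `κ := ε/δ`, and take `Ω' := {λ | 1 - κ ≤ f λ}`. Since `f ≤ 1`, the
Markov inequality for `1 - f ≥ 0` under `χ` gives `κ · χ(Ω'ᶜ) ≤ 1 - ν(Ω) < ε = κ δ`,
i.e. `χ(Ω') > 1 - δ`; Markov's inequality for `f` under `μ'` gives `(1 - κ) μ'(Ω') ≤ ∫ f dμ' = μ(Ω)`.
-/

open MeasureTheory ProbabilityTheory

lemma MeasureTheory.Measure.bind_real_apply {α β : Type*} [MeasurableSpace α] [MeasurableSpace β]
    (μ : Measure α) (κ : Kernel α β) [IsFiniteKernel κ] {s : Set β} (hs : MeasurableSet s) :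
    (μ.bind κ).real s = ∫ a, (κ a).real s ∂μ := by
  simp only [measureReal_def]
  rw [Measure.bind_apply hs κ.aemeasurable,
    integral_toReal (κ.measurable_coe hs).aemeasurable (ae_of_all _ fun a => measure_lt_top (κ a) s)]

lemma mul_measureReal_lt_sub_le_sub_integral {α : Type*} [MeasurableSpace α] {μ : Measure α}
    [IsProbabilityMeasure μ] {f : α → ℝ} {b c : ℝ} (hf : Integrable f μ) (hfb : ∀ᵐ x ∂μ, f x ≤ b)
    (hc : 0 ≤ c) : c * μ.real {x | f x < b - c} ≤ b - ∫ x, f x ∂μ :=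
  calc c * μ.real {x | f x < b - c}
      ≤ c * μ.real {x | c ≤ b - f x} := by
        refine mul_le_mul_of_nonneg_left (measureReal_mono fun x hx => ?_) hc
        simp only [Set.mem_ofPred_eq] at hx ⊢
        linarith
    _ ≤ ∫ x, b - f x ∂μ :=
        mul_meas_ge_le_integral_of_nonneg (by filter_upwards [hfb] with x hx using sub_nonneg.2 hx)
          ((integrable_const b).sub hf) c
    _ = b - ∫ x, f x ∂μ := by simp [integral_sub (integrable_const b) hf]

theorem stmt19_general {Λ : Type*} [MeasurableSpace Λ]
    (γ : Kernel Λ Λ) [IsMarkovKernel γ]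
    (μ' χ : Measure Λ) [IsProbabilityMeasure μ'] [IsProbabilityMeasure χ]
    (ε δ : ℝ) (hδ0 : 0 < δ)
    (Ω : Set Λ) (hΩ : MeasurableSet Ω)
    (hνΩ : 1 - ε < ((χ.bind γ) Ω).toReal) :
    ∃ Ω' : Set Λ, MeasurableSet Ω' ∧ 1 - δ < (χ Ω').toReal ∧
      (1 - ε / δ) * (μ' Ω').toReal ≤ ((μ'.bind γ) Ω).toReal := by
  set f : Λ → ℝ := fun l => (γ l).real Ω
  have hf : Measurable f := (γ.measurable_coe hΩ).ennreal_toReal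
  have hν : (χ.bind γ).real Ω = ∫ l, f l ∂χ := Measure.bind_real_apply χ γ hΩ
  change 1 - ε < (χ.bind γ).real Ω at hνΩ
  have hε : 0 < ε := by linarith [measureReal_le_one (μ := χ.bind γ) (s := Ω)]
  set κ := ε / δ
  have hκ : 0 < κ := div_pos hε hδ0
  have hΩ'_compl : {l | 1 - κ ≤ f l} = {l | f l < 1 - κ}ᶜ := by ext; simp
  refine ⟨{l | 1 - κ ≤ f l}, measurableSet_le measurable_const hf, ?_, ?_⟩
  · have hmarkov : κ * χ.real {l | f l < 1 - κ} ≤ 1 - ∫ l, f l ∂χ :=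
      mul_measureReal_lt_sub_le_sub_integral (Kernel.IsMarkovKernel.integrable χ γ hΩ)
        (ae_of_all _ fun _ => measureReal_le_one) hκ.le
    have hκδ : κ * δ = ε := div_mul_cancel₀ ε hδ0.ne'
    have hsmall : χ.real {l | f l < 1 - κ} < δ := by
      refine lt_of_mul_lt_mul_left ?_ hκ.le
      linarith
    change 1 - δ < χ.real _
    rw [hΩ'_compl, probReal_compl_eq_one_sub (measurableSet_lt hf measurable_const)]
    linarith
  · calc (1 - κ) * μ'.real {l | 1 - κ ≤ f l}
        _ ≤ ∫ l, f l ∂μ' := mul_meas_ge_le_integral_of_nonneg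
            (ae_of_all _ fun _ => measureReal_nonneg) (Kernel.IsMarkovKernel.integrable μ' γ hΩ) _
        _ = (μ'.bind γ).real Ω := (Measure.bind_real_apply μ' γ hΩ).symm

theorem stmt19 {Λ : Type*} [MeasurableSpace Λ]
    (γ : Kernel Λ Λ) [IsMarkovKernel γ]
    (μ' χ : Measure Λ) [IsProbabilityMeasure μ'] [IsProbabilityMeasure χ]
    (ε δ : ℝ) (hε0 : 0 ≤ ε) (hεδ : ε ≤ δ) (hδ0 : 0 < δ) (hδ1 : δ < 1)
    (Ω : Set Λ) (hΩ : MeasurableSet Ω)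
    (hνΩ : 1 - ε < ((χ.bind γ) Ω).toReal) :
    ∃ Ω' : Set Λ, MeasurableSet Ω' ∧ 1 - δ < (χ Ω').toReal ∧
      (1 - ε / δ) * (μ' Ω').toReal ≤ ((μ'.bind γ) Ω).toReal :=
  stmt19_general γ μ' χ ε δ hδ0 Ω hΩ hνΩ
end
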